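/- For every sequence X = (x_i)_{i=1}^N of nonzero points in [0,1]^k (N finite or infinite) and every admissible sequence C = (c_i)_{i=0}^N with c_0 = 0 and c_i ∈ [0, 1/‖x_i‖_∞], there exists a sequence Q = (q_i)_{i=0}^N with q_0 = 0 and q_i ∈ [0,1]^k such that MenuGap(X,Q) ≥ AlignGap(X,C). Consequently AlignGap(X) ≤ MenuGap(X). -/
import Mathlib


open scoped BigOperators ENNReal NNReal
open Filter
open scoped Classical

noncomputable section

namespace Stmt2

/-- Valuation / allocation vectors over `k` items. -/
abbrev V (k : ℕ) := Fin k → ℝ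

/-- Dot product. -/
def dot {k : ℕ} (x y : V k) : ℝ := ∑ t, x t * y t

/-- ℓ¹ norm. -/
def norm1 {k : ℕ} (x : V k) : ℝ := ∑ t, |x t|

/-- Sum of a (possibly divergent) series, as limsup of partial sums in `EReal`. -/
def eseries (f : ℕ → ℝ) : EReal :=
  Filter.limsup (fun n => ((∑ i ∈ Finset.range n, f i : ℝ) : EReal)) Filter.atTop

/-- Valid index set of a sequence of length `N` (finite or `⊤`), indices starting at 1. -/
def idx (N : ℕ∞) : Set ℕ := {i | 1 ≤ i ∧ (i : ℕ∞) ≤ N}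

/-- `gap_i^{X,Q} := min_{0 ≤ j < i} (q_i - q_j)·x_i`. -/
def gapS {k : ℕ} (S : Set ℕ) (X Q : ℕ → V k) (i : ℕ) : ℝ :=
  sInf {y | ∃ j : ℕ, (j ∈ S ∨ j = 0) ∧ j < i ∧ y = dot (Q i - Q j) (X i)}

/-- `MenuGap(X,Q) := ∑_i gap_i^{X,Q}/‖x_i‖₁`. -/
def menuGapS {k : ℕ} (S : Set ℕ) (X Q : ℕ → V k) : EReal :=
  eseries (S.indicator fun i => gapS S X Q i / norm1 (X i))

/-- An admissible allocation sequence: `q_0 = 0` and all `q_i ∈ [0,1]^k`. -/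
def admissibleQ {k : ℕ} (Q : ℕ → V k) : Prop :=
  Q 0 = 0 ∧ ∀ i t, Q i t ∈ Set.Icc (0:ℝ) 1

/-- `sgap_i^{X,C} := min_{0 ≤ j < i} x_i·(c_i x_i − c_j x_j)` (with `c_0 = 0`,
so the `j = 0` term encodes `x_0 := 0`). -/
def sgapS {k : ℕ} (S : Set ℕ) (X : ℕ → V k) (c : ℕ → ℝ) (i : ℕ) : ℝ :=
  sInf {y | ∃ j : ℕ, (j ∈ S ∨ j = 0) ∧ j < i ∧ y = dot (X i) (c i • X i - c j • X j)}

/-- `AlignGap(X,C) := ∑_i max{0, sgap_i^{X,C}}/‖x_i‖₁` in `ℝ≥0∞`. -/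
def alignGapE {k : ℕ} (S : Set ℕ) (X : ℕ → V k) (c : ℕ → ℝ) : ℝ≥0∞ :=
  ∑' i : ℕ, S.indicator (fun i => ENNReal.ofReal (max 0 (sgapS S X c i) / norm1 (X i))) i

/-- An admissible scalar sequence: `c_0 = 0` and `c_i ∈ [0, 1/‖x_i‖_∞]` for valid `i`. -/
def admissibleC {k : ℕ} (S : Set ℕ) (X : ℕ → V k) (c : ℕ → ℝ) : Prop :=
  c 0 = 0 ∧ ∀ i ∈ S, c i ∈ Set.Icc (0:ℝ) (1 / ‖X i‖)

lemma dot_comm {k : ℕ} (x y : V k) : dot x y = dot y x := by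
  simp [dot, mul_comm]
lemma dot_sub_left {k : ℕ} (x y z : V k) : dot (x - y) z = dot x z - dot y z := by
  simp [dot, sub_mul, Finset.sum_sub_distrib]
def PP {k : ℕ} (X : ℕ → V k) (c : ℕ → ℝ) (g : ℕ) : V k := c g • X g
def goodI {k : ℕ} (S : Set ℕ) (X : ℕ → V k) (c : ℕ → ℝ) (i : ℕ) : Prop :=
  i ∈ S ∧ 0 < sgapS S X c i
noncomputable def FF {k : ℕ} (S : Set ℕ) (X : ℕ → V k) (c : ℕ → ℝ) (i : ℕ) : Finset (V k) :=
  insert 0 (((Finset.range i).filter (goodI S X c)).image (PP X c))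
lemma FF_nonempty {k : ℕ} (S : Set ℕ) (X : ℕ → V k) (c : ℕ → ℝ) (i : ℕ) :
    (FF S X c i).Nonempty := ⟨0, Finset.mem_insert_self _ _⟩
noncomputable def QQ {k : ℕ} (S : Set ℕ) (X : ℕ → V k) (c : ℕ → ℝ) (i : ℕ) : V k :=
  if goodI S X c i then PP X c i
  else Classical.choose (Finset.exists_max_image (FF S X c i) (fun p => dot p (X i))
    (FF_nonempty S X c i))
lemma mem_FF_iff {k : ℕ} {S : Set ℕ} {X : ℕ → V k} {c : ℕ → ℝ} {i : ℕ} {p : V k} :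
    p ∈ FF S X c i ↔ p = 0 ∨ ∃ g, g < i ∧ goodI S X c g ∧ p = PP X c g := by
  simp only [FF, Finset.mem_insert, Finset.mem_image, Finset.mem_filter, Finset.mem_range]
  aesop
lemma FF_mono {k : ℕ} {S : Set ℕ} {X : ℕ → V k} {c : ℕ → ℝ} {j i : ℕ} (h : j ≤ i) :
    FF S X c j ⊆ FF S X c i := by
  intro p hp
  rw [mem_FF_iff] at hp ⊢
  rcases hp with h0 | ⟨g, hg, hgood, rfl⟩
  · exact Or.inl h0
  · exact Or.inr ⟨g, lt_of_lt_of_le hg h, hgood, rfl⟩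
lemma QQ_mem {k : ℕ} (S : Set ℕ) (X : ℕ → V k) (c : ℕ → ℝ) (i : ℕ) :
    QQ S X c i ∈ FF S X c (i + 1) := by
  unfold QQ
  split_ifs with h
  · rw [mem_FF_iff]
    exact Or.inr ⟨i, Nat.lt_succ_self i, h, rfl⟩
  · exact FF_mono (Nat.le_succ i)
      (Classical.choose_spec (Finset.exists_max_image (FF S X c i) (fun p => dot p (X i))
        (FF_nonempty S X c i))).1
lemma QQ_max {k : ℕ} {S : Set ℕ} {X : ℕ → V k} {c : ℕ → ℝ} {i : ℕ}
    (h : ¬ goodI S X c i) {p : V k} (hp : p ∈ FF S X c i) :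
    dot p (X i) ≤ dot (QQ S X c i) (X i) := by
  unfold QQ
  rw [if_neg h]
  exact (Classical.choose_spec (Finset.exists_max_image (FF S X c i) (fun p => dot p (X i))
    (FF_nonempty S X c i))).2 p hp
lemma QQ_zero {k : ℕ} {S : Set ℕ} {X : ℕ → V k} {c : ℕ → ℝ} (h0 : (0:ℕ) ∉ S) :
    QQ S X c 0 = 0 := by
  have hng : ¬ goodI S X c 0 := fun hg => h0 hg.1
  have h' : QQ S X c 0 ∈ FF S X c 0 := by
    unfold QQ
    rw [if_neg hng]
    exact (Classical.choose_spec (Finset.exists_max_image (FF S X c 0) (fun p => dot p (X 0))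
      (FF_nonempty S X c 0))).1
  rw [mem_FF_iff] at h'
  rcases h' with h' | ⟨g, hg, _⟩
  · exact h'
  · exact absurd hg (Nat.not_lt_zero g)

lemma main {k : ℕ} (N : ℕ∞) (X : ℕ → V k)
    (hX : ∀ i ∈ idx N, X i ≠ 0 ∧ ∀ t, X i t ∈ Set.Icc (0:ℝ) 1)
    (c : ℕ → ℝ) (hc : admissibleC (idx N) X c) :
    ∃ Q : ℕ → V k, admissibleQ Q ∧
      ((alignGapE (idx N) X c : ℝ≥0∞) : EReal) ≤ menuGapS (idx N) X Q := by
  set S := idx N with hS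
  have h0S : (0:ℕ) ∉ S := fun h => absurd h.1 (by norm_num)
  refine ⟨QQ S X c, ⟨QQ_zero h0S, ?_⟩, ?_⟩
  · -- coordinates in [0,1]
    have coordP : ∀ g ∈ S, ∀ t, PP X c g t ∈ Set.Icc (0:ℝ) 1 := by
      intro g hg t
      obtain ⟨hne, hco⟩ := hX g hg
      obtain ⟨hc0, hc1⟩ := hc.2 g hg
      have hnorm : 0 < ‖X g‖ := norm_pos_iff.2 hne
      have hxt : X g t ≤ ‖X g‖ := le_trans (le_abs_self _) (norm_le_pi_norm (X g) t)
      have hPP : PP X c g t = c g * X g t := rfl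
      rw [hPP]
      constructor
      · exact mul_nonneg hc0 (hco t).1
      · calc c g * X g t ≤ (1 / ‖X g‖) * ‖X g‖ :=
              mul_le_mul hc1 hxt (hco t).1 (by positivity)
          _ = 1 := by field_simp
    intro i t
    have h := QQ_mem S X c i
    rw [mem_FF_iff] at h
    rcases h with h | ⟨g, _, hgood, h⟩
    · rw [h]; exact ⟨le_refl 0, zero_le_one⟩
    · rw [h]; exact coordP g hgood.1 t
  · -- the series inequality
    set Q := QQ S X c with hQdef
    have key : ∀ i ∈ S, max 0 (sgapS S X c i) ≤ gapS S X Q i := by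
      intro i hi
      have hi1 : 1 ≤ i := hi.1
      have hGne : {y | ∃ j : ℕ, (j ∈ S ∨ j = 0) ∧ j < i ∧ y = dot (Q i - Q j) (X i)}.Nonempty :=
        ⟨dot (Q i - Q 0) (X i), 0, Or.inr rfl, hi1, rfl⟩
      by_cases hg : goodI S X c i
      · rw [max_eq_right hg.2.le]
        refine le_csInf hGne ?_
        rintro y ⟨j, hjS, hji, rfl⟩
        have hQi : Q i = c i • X i := by
          rw [hQdef]; unfold QQ; rw [if_pos hg]; rfl
        have hQj : Q j ∈ FF S X c i := FF_mono (Nat.succ_le_of_lt hji) (QQ_mem S X c j)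
        have hbdd : BddBelow {y | ∃ j : ℕ, (j ∈ S ∨ j = 0) ∧ j < i ∧
            y = dot (X i) (c i • X i - c j • X j)} := by
          apply Set.Finite.bddBelow
          apply Set.Finite.subset
            ((Set.finite_Iio i).image (fun j => dot (X i) (c i • X i - c j • X j)))
          rintro y ⟨j, _, hji', rfl⟩
          exact ⟨j, hji', rfl⟩
        rw [mem_FF_iff] at hQj
        rcases hQj with hQj0 | ⟨g, hgi, hgood, hQjg⟩
        · refine csInf_le hbdd ⟨0, Or.inr rfl, hi1, ?_⟩
          rw [hQi, hQj0, hc.1, zero_smul, sub_zero]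
          exact dot_comm _ _
        · refine csInf_le hbdd ⟨g, Or.inl hgood.1, hgi, ?_⟩
          rw [hQi, hQjg]
          show dot (c i • X i - c g • X g) (X i) = _
          exact dot_comm _ _
      · rw [max_eq_left (not_lt.1 fun h => hg ⟨hi, h⟩)]
        refine le_csInf hGne ?_
        rintro y ⟨j, hjS, hji, rfl⟩
        have hQj : Q j ∈ FF S X c i := FF_mono (Nat.succ_le_of_lt hji) (QQ_mem S X c j)
        rw [dot_sub_left]
        exact sub_nonneg.2 (QQ_max hg hQj)
    have hn1 : ∀ i ∈ S, 0 < norm1 (X i) := by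
      intro i hi
      obtain ⟨hne, _⟩ := hX i hi
      obtain ⟨t, ht⟩ := Function.ne_iff.1 hne
      exact Finset.sum_pos' (fun t _ => abs_nonneg _) ⟨t, Finset.mem_univ t, abs_pos.2 ht⟩
    have hn1nn : ∀ i, 0 ≤ norm1 (X i) := fun i => Finset.sum_nonneg fun t _ => abs_nonneg _
    set f := S.indicator (fun i => gapS S X Q i / norm1 (X i)) with hf
    set g := S.indicator (fun i => max 0 (sgapS S X c i) / norm1 (X i)) with hg
    have hg0 : ∀ i, 0 ≤ g i :=
      fun i => Set.indicator_nonneg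
        (fun i _ => div_nonneg (le_max_left 0 _) (hn1nn i)) i
    have hgf : ∀ i, g i ≤ f i := by
      intro i
      by_cases hi : i ∈ S
      · rw [hg, hf, Set.indicator_of_mem hi, Set.indicator_of_mem hi]
        exact div_le_div_of_nonneg_right (key i hi) (hn1 i hi).le
      · rw [hg, hf, Set.indicator_of_notMem hi, Set.indicator_of_notMem hi]
    have hf0 : ∀ i, 0 ≤ f i := fun i => (hg0 i).trans (hgf i)
    have Mmono : ∀ n m, n ≤ m →
        (∑ i ∈ Finset.range n, f i) ≤ ∑ i ∈ Finset.range m, f i := fun n m h =>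
      Finset.sum_le_sum_of_subset_of_nonneg (Finset.range_subset_range.2 h) (fun i _ _ => hf0 i)
    have hMlim : ∀ n, ((∑ i ∈ Finset.range n, f i : ℝ) : EReal) ≤ menuGapS S X Q := by
      intro n
      have hrw : menuGapS S X Q =
          Filter.limsup (fun m => ((∑ i ∈ Finset.range m, f i : ℝ) : EReal)) atTop := rfl
      rw [hrw]
      refine le_limsup_of_frequently_le ?_ (by isBoundedDefault)
      exact ((eventually_ge_atTop n).mono fun m hm =>
        EReal.coe_le_coe_iff.2 (Mmono n m hm)).frequently
    set g' := fun i => S.indicator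
      (fun i => ENNReal.ofReal (max 0 (sgapS S X c i) / norm1 (X i))) i with hg'
    have hg'g : ∀ i, g' i = ENNReal.ofReal (g i) := by
      intro i
      by_cases hi : i ∈ S
      · rw [hg', hg]; simp [Set.indicator_of_mem hi]
      · rw [hg', hg]; simp [Set.indicator_of_notMem hi]
    have hsum : ∀ n, (∑ i ∈ Finset.range n, g' i) =
        ENNReal.ofReal (∑ i ∈ Finset.range n, g i) := by
      intro n
      rw [ENNReal.ofReal_sum_of_nonneg (fun i _ => hg0 i)]
      exact Finset.sum_congr rfl fun i _ => hg'g i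
    have halign : alignGapE S X c = ∑' i, g' i := rfl
    have ht : Tendsto (fun n => ((∑ i ∈ Finset.range n, g' i : ℝ≥0∞) : EReal)) atTop
        (nhds ((alignGapE S X c : ℝ≥0∞) : EReal)) := by
      rw [halign]
      exact (continuous_coe_ennreal_ereal.tendsto _).comp (ENNReal.tendsto_nat_tsum g')
    refine le_of_tendsto ht (Eventually.of_forall fun n => ?_)
    rw [hsum n, EReal.coe_ennreal_ofReal,
      max_eq_left (Finset.sum_nonneg fun i _ => hg0 i)]
    exact le_trans (EReal.coe_le_coe_iff.2 (Finset.sum_le_sum fun i _ => hgf i)) (hMlim n)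

theorem stmt2 (k : ℕ) (N : ℕ∞) (X : ℕ → V k)
    (hX : ∀ i ∈ idx N, X i ≠ 0 ∧ ∀ t, X i t ∈ Set.Icc (0:ℝ) 1)
    (c : ℕ → ℝ) (hc : admissibleC (idx N) X c) :
    (∃ Q : ℕ → V k, admissibleQ Q ∧
        ((alignGapE (idx N) X c : ℝ≥0∞) : EReal) ≤ menuGapS (idx N) X Q) ∧
    (⨆ C : {c' : ℕ → ℝ // admissibleC (idx N) X c'},
        ((alignGapE (idx N) X C.1 : ℝ≥0∞) : EReal)) ≤
      ⨆ Q : {Q : ℕ → V k // admissibleQ Q}, menuGapS (idx N) X Q.1 := by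
  constructor
  · exact main N X hX c hc
  · refine iSup_le ?_
    rintro ⟨C, hC⟩
    obtain ⟨Q, hQ, hle⟩ := main N X hX C hC
    exact le_trans hle
      (le_iSup (fun Q : {Q : ℕ → V k // admissibleQ Q} => menuGapS (idx N) X Q.1) ⟨Q, hQ⟩)

end Stmt2
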